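/- For any real polynomial P of degree at most 5, denoting q_i = P(a + i·h), the average of P over [a - h/2, a + h/2] equals (863/960)·q_0 + (77/1440)·(q_1 + q_{-1}) - (17/5760)·(q_2 + q_{-2}). -/

import Mathlib

/-!
Rescaling `t = a + h s` turns the cell average into `∫_{-1/2}^{1/2} Q` for the polynomial
`Q(s) = P(a + h s)`, of the same degree, and the samples into `Q(0), Q(±1), Q(±2)`. Both sides are
linear in the coefficients of `Q`, so it suffices that the rule integrates `1, s, …, s⁵` exactly
over `[-1/2, 1/2]`: odd monomials vanish on both sides by symmetry, and the weights reproduce the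
even moments `1, 1/12, 1/80`.
-/

open Polynomial Finset

theorem Polynomial.integral_eval_eq_sum_range (P : ℝ[X]) {n : ℕ} (hn : P.natDegree < n)
    (a b : ℝ) :
    ∫ x in a..b, P.eval x =
      ∑ i ∈ range n, P.coeff i * ((b ^ (i + 1) - a ^ (i + 1)) / (i + 1)) := by
  simp_rw [eval_eq_sum_range' hn]
  rw [intervalIntegral.integral_finsetSum fun i _ =>
    (intervalIntegral.intervalIntegrable_pow i).const_mul _]
  refine sum_congr rfl fun i _ => ?_
  rw [intervalIntegral.integral_const_mul, integral_pow]

theorem integral_centered_eq_mul_integral_unit_cell (f : ℝ → ℝ) (a h : ℝ) :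
    ∫ t in (a - h / 2)..(a + h / 2), f t =
      h * ∫ s in (-1 / 2 : ℝ)..(1 / 2), f (h * s + a) := by
  rw [← smul_eq_mul, intervalIntegral.smul_integral_comp_mul_add]
  congr 1 <;> ring

theorem integral_unit_cell_eq_sixth_order_rule (Q : ℝ[X]) (hQ : Q.degree ≤ 5) :
    ∫ s in (-1 / 2 : ℝ)..(1 / 2), Q.eval s =
      (863 / 960) * Q.eval 0 + (77 / 1440) * (Q.eval 1 + Q.eval (-1))
        - (17 / 5760) * (Q.eval 2 + Q.eval (-2)) := by
  have hdeg : Q.natDegree < 6 := Nat.lt_succ_of_le (natDegree_le_of_degree_le hQ)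
  rw [Q.integral_eval_eq_sum_range hdeg]
  simp only [eval_eq_sum_range' hdeg, sum_range_succ, sum_range_zero]
  norm_num
  ring

theorem stmt_8 (P : Polynomial ℝ) (hP : P.degree ≤ 5) (a h : ℝ) (hh : 0 < h)
    (q : ℤ → ℝ) (hq : ∀ i : ℤ, q i = P.eval (a + i * h)) :
    (1 / h) * (∫ t in (a - h / 2)..(a + h / 2), P.eval t) =
      (863 / 960) * q 0 + (77 / 1440) * (q 1 + q (-1)) - (17 / 5760) * (q 2 + q (-2)) := by
  set Q := P.comp (C h * X + C a)
  have hQ_eval (s : ℝ) : Q.eval s = P.eval (h * s + a) := by simp [Q]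
  have hQ_deg : Q.degree ≤ 5 := by
    refine degree_le_of_natDegree_le ((natDegree_comp_le).trans ?_)
    simpa using
      Nat.mul_le_mul (natDegree_le_of_degree_le hP) (natDegree_linear_le (a := h) (b := a))
  have hq_eval (i : ℤ) : q i = Q.eval (i : ℝ) := by rw [hq, hQ_eval]; ring_nf
  rw [integral_centered_eq_mul_integral_unit_cell, ← funext hQ_eval,
    integral_unit_cell_eq_sixth_order_rule Q hQ_deg, ← mul_assoc, one_div_mul_cancel hh.ne',
    one_mul]
  simp only [hq_eval]
  push_cast
  ring
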